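/- Let $S^1 \subset \mathbb{R}^2$ be the unit circle, $x \in S^1$, and let $T_x S^1$ denote the affine tangent line to $S^1$ at $x$. For $0 \leq r \leq 1$, let $B_r^{S^1}(x) = S^1 \cap B_r(x)$ and $B_r^{T}(x) = T_x S^1 \cap B_r(x)$, where $B_r(x)$ is the closed Euclidean ball of radius $r$ centered at $x$. Then the Hausdorff distance satisfies $d_H(B_r^{S^1}(x), B_r^T(x)) \leq \frac{1}{2} r^2$. -/

import Mathlib

/-!
Both sets are related by explicit nearest-point maps. A point `a` of the unit sphere is sent to
its orthogonal projection `a + (1 - ⟪a, x⟫) • x` on the tangent hyperplane at `x`, which moves it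
by `1 - ⟪a, x⟫ = ‖a - x‖² / 2`; a point `b` of the tangent hyperplane is sent radially to
`b / ‖b‖`, which moves it by `‖b‖ - 1 ≤ (‖b‖² - 1) / 2 = ‖b - x‖² / 2`. Neither map increases
the distance to `x`, so both stay in the ball of radius `r`.
-/

open Metric RealInnerProductSpace

section TangentHyperplane

variable {E : Type*} [SeminormedAddCommGroup E] [InnerProductSpace ℝ E] {x : E}

theorem norm_sub_sq_eq_two_sub_inner {a : E} (ha : ‖a‖ = 1) (hx : ‖x‖ = 1) :
    ‖a - x‖ ^ 2 = 2 - 2 * ⟪a, x⟫ := by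
  rw [norm_sub_sq_real, ha, hx]
  ring

theorem exists_inner_eq_one_dist_le_of_norm_eq_one (hx : ‖x‖ = 1) {a : E} (ha : ‖a‖ = 1) :
    ∃ b : E, ⟪b, x⟫ = 1 ∧ dist b x ≤ dist a x ∧ dist a b = dist a x ^ 2 / 2 := by
  set s := ⟪a, x⟫
  have hs_le : s ≤ 1 := by simpa [ha, hx] using real_inner_le_norm a x
  have hdist : ‖a - x‖ ^ 2 = 2 - 2 * s := norm_sub_sq_eq_two_sub_inner ha hx
  refine ⟨a + (1 - s) • x, ?_, ?_, ?_⟩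
  · rw [inner_add_left, real_inner_smul_left, real_inner_self_eq_norm_sq, hx]
    ring
  · have hsq : ‖(a - x) + (1 - s) • x‖ ^ 2 = ‖a - x‖ ^ 2 - (1 - s) ^ 2 := by
      rw [norm_add_sq_real, real_inner_smul_right, inner_sub_left, norm_smul,
        real_inner_self_eq_norm_sq, hx, Real.norm_eq_abs, mul_pow, sq_abs]
      ring
    rw [dist_eq_norm, dist_eq_norm, show a + (1 - s) • x - x = (a - x) + (1 - s) • x by abel]
    refine le_of_sq_le_sq ?_ (norm_nonneg _)
    nlinarith
  · rw [dist_eq_norm, dist_eq_norm, hdist, sub_add_cancel_left, norm_neg, norm_smul, hx,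
      Real.norm_of_nonneg (sub_nonneg.mpr hs_le)]
    ring

theorem exists_norm_eq_one_dist_le_of_inner_eq_one (hx : ‖x‖ = 1) {b : E} (hb : ⟪b, x⟫ = 1) :
    ∃ a : E, ‖a‖ = 1 ∧ dist a x ≤ dist b x ∧ dist b a ≤ dist b x ^ 2 / 2 := by
  set n := ‖b‖ with hn
  have hdist : ‖b - x‖ ^ 2 = n ^ 2 - 1 := by
    rw [norm_sub_sq_real, hb, hx]
    ring
  have hn_ge : 1 ≤ n := by nlinarith [norm_nonneg b, sq_nonneg ‖b - x‖]
  have hn_pos : 0 < n := by linarith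
  have ha : ‖n⁻¹ • b‖ = 1 := by
    rw [norm_smul, norm_inv, Real.norm_of_nonneg hn_pos.le, ← hn, inv_mul_cancel₀ hn_pos.ne']
  refine ⟨n⁻¹ • b, ha, ?_, ?_⟩
  · rw [dist_eq_norm, dist_eq_norm]
    refine le_of_sq_le_sq ?_ (norm_nonneg _)
    rw [norm_sub_sq_eq_two_sub_inner ha hx, real_inner_smul_left, hb, hdist, mul_one]
    have hfactor : n ^ 2 - 1 - (2 - 2 * n⁻¹) = (n - 1) ^ 2 * (n + 2) / n := by
      field_simp
      ring
    rw [← sub_nonneg, hfactor]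
    positivity
  · have hsub : b - n⁻¹ • b = (1 - n⁻¹) • b := by rw [sub_smul, one_smul]
    rw [dist_eq_norm, dist_eq_norm, hsub, norm_smul, hdist, ← hn,
      Real.norm_of_nonneg (sub_nonneg.mpr (inv_le_one_of_one_le₀ hn_ge)), sub_mul,
      inv_mul_cancel₀ hn_pos.ne', one_mul]
    nlinarith [sq_nonneg (n - 1)]

theorem hausdorffDist_sphere_inter_closedBall_tangent_le (hx : ‖x‖ = 1) (r : ℝ) :
    hausdorffDist (sphere 0 1 ∩ closedBall x r) ({p | ⟪p, x⟫ = 1} ∩ closedBall x r) ≤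
      r ^ 2 / 2 := by
  have hsq {d : ℝ} (hd : d ≤ r) (hd₀ : 0 ≤ d) : d ^ 2 / 2 ≤ r ^ 2 / 2 := by gcongr
  refine hausdorffDist_le_of_mem_dist (by positivity) ?_ ?_
  · rintro a ⟨ha, har⟩
    rw [mem_sphere_zero_iff_norm] at ha
    rw [mem_closedBall] at har
    obtain ⟨b, hb, hbx, hab⟩ := exists_inner_eq_one_dist_le_of_norm_eq_one hx ha
    exact ⟨b, ⟨hb, hbx.trans har⟩, hab.trans_le (hsq har dist_nonneg)⟩
  · rintro b ⟨hb, hbr⟩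
    rw [mem_closedBall] at hbr
    obtain ⟨a, ha, hax, hba⟩ := exists_norm_eq_one_dist_le_of_inner_eq_one hx hb
    exact ⟨a, ⟨mem_sphere_zero_iff_norm.mpr ha, hax.trans hbr⟩, hba.trans (hsq hbr dist_nonneg)⟩

end TangentHyperplane

theorem circle_tangent_hausdorff_general (r : ℝ)
    (x : EuclideanSpace ℝ (Fin 2)) (hx : x = (WithLp.equiv 2 (Fin 2 → ℝ)).symm ![1, 0]) :
    Metric.hausdorffDist
      (Metric.sphere (0 : EuclideanSpace ℝ (Fin 2)) 1 ∩ Metric.closedBall x r)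
      ({p : EuclideanSpace ℝ (Fin 2) | p 0 = 1} ∩ Metric.closedBall x r) ≤
      (1 / 2) * r ^ 2 := by
  have hx_single : x = EuclideanSpace.single 0 1 := by
    subst hx
    ext i
    fin_cases i <;> rfl
  have htangent : {p : EuclideanSpace ℝ (Fin 2) | p 0 = 1} = {p | ⟪p, x⟫ = 1} := by
    ext p
    simp [hx_single, EuclideanSpace.inner_single_right]
  have hx_norm : ‖x‖ = 1 := by simp [hx_single]
  rw [htangent, one_div_mul_eq_div]
  exact hausdorffDist_sphere_inter_closedBall_tangent_le hx_norm r

/-- Tangent-line approximation of the unit circle: with `x = (1,0) ∈ S¹ ⊂ ℝ²` and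
tangent line `T = {p : p₀ = 1}`, for `0 ≤ r ≤ 1` the Hausdorff distance between
`S¹ ∩ B̄_r(x)` and `T ∩ B̄_r(x)` is at most `r²/2`. -/
theorem circle_tangent_hausdorff (r : ℝ) (hr0 : 0 ≤ r) (hr1 : r ≤ 1)
    (x : EuclideanSpace ℝ (Fin 2)) (hx : x = (WithLp.equiv 2 (Fin 2 → ℝ)).symm ![1, 0]) :
    Metric.hausdorffDist
      (Metric.sphere (0 : EuclideanSpace ℝ (Fin 2)) 1 ∩ Metric.closedBall x r)
      ({p : EuclideanSpace ℝ (Fin 2) | p 0 = 1} ∩ Metric.closedBall x r) ≤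
      (1 / 2) * r ^ 2 :=
  circle_tangent_hausdorff_general r x hx
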